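/- Let m ≤ n both be powers of two with m ≥ 2, and suppose there exists an MR (m, m, a=1, b=1, h=1) grid code over a field F_{q_m} where q_m is a power of two. Then there exists an MR (m, n, a=1, b=1, h=1) grid code over the field F_q with q = (n/m)^{m−1} · q_m (a power of two). -/

import Mathlib

/-!
In characteristic 2 a grid code with one global parity is MR exactly when the global labels on
every simple cycle have nonzero sum. The all-ones vector on a cycle passes every row and column
check, which gives one direction. Conversely, the support of a kernel vector has no vertex of
degree one, so it contains a simple cycle; if the support lies in an acyclic set plus one edge `f`,
that cycle passes through `f`, and removing `v f` times the cycle leaves a kernel vector on the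
acyclic part, which must vanish.

For the construction, split each column `j` of the `m × n` grid as `(q j, t j) ∈ [m] × [n/m]` and
label the edge `(i, j)` with `(c (i, q j), γ (i, t j)) ∈ F_{q_m} × (F_2^r)^(m-1)`, where `γ (i, s)`
places a binary name of `s` in coordinate `i`. If a simple cycle had labels summing to zero, the
`γ`-part would force `t` to be constant along the cycle. Then `q` would map it to a simple cycle
of the `m × m` grid with the same `c`-sum, which is impossible. Finally, `F` is additively
isomorphic to `F_{q_m} × F_2^(r(m-1))`, because both are `F_2`-spaces with the same number of
elements.
-/

open Finset

/-- A subset of `[m] × [n]`, viewed as the edge set of a bipartite graph with left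
vertex set `Fin m` and right vertex set `Fin n`, is a *simple cycle* (of length `2k`,
`k ≥ 2`) if it has the form
`{(i₁,j₁),(i₂,j₁),(i₂,j₂),(i₃,j₂),…,(i_k,j_k),(i₁,j_k)}`
for pairwise distinct `i₁,…,i_k` and pairwise distinct `j₁,…,j_k`. -/
def IsSimpleCycle {m n : ℕ} (C : Finset (Fin m × Fin n)) : Prop :=
  ∃ k : ℕ, 2 ≤ k ∧ ∃ (I : ℕ → Fin m) (J : ℕ → Fin n),
    Set.InjOn I (Set.Iio k) ∧ Set.InjOn J (Set.Iio k) ∧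
    C = ((Finset.range k).image fun ℓ => (I ℓ, J ℓ)) ∪
        ((Finset.range k).image fun ℓ => (I ((ℓ + 1) % k), J ℓ))

/-- An edge set is *acyclic* if it contains no simple cycle. -/
def IsAcyclicEdges {m n : ℕ} (E : Finset (Fin m × Fin n)) : Prop :=
  ∀ C ⊆ E, ¬ IsSimpleCycle C

/-- The parity-check matrix of an `(m, n, a = 1, b = 1, h)` grid code over `F` with
global parity-check vectors `c`.  Rows are indexed by `Fin m ⊕ (Fin (n-1) ⊕ Fin h)`
(the `m` row checks, the first `n - 1` column checks, and the `h` global checks) and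
columns by `Fin m × Fin n`. -/
def gridH (F : Type*) [Field F] (m n h : ℕ) (c : Fin m × Fin n → Fin h → F) :
    Matrix (Fin m ⊕ (Fin (n - 1) ⊕ Fin h)) (Fin m × Fin n) F :=
  Matrix.of fun r ij =>
    Sum.elim (fun i => if ij.1 = i then (1 : F) else 0)
      (Sum.elim (fun j : Fin (n - 1) => if (ij.2 : ℕ) = (j : ℕ) then (1 : F) else 0)
        (fun k => c ij k)) r

/-- The grid code with global parity checks `c` is *maximally recoverable* (MR) if the
columns of its parity-check matrix indexed by `E` are linearly independent for every
pattern `E` which is the union of an acyclic edge set and at most `h` further edges. -/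
def IsMR (F : Type*) [Field F] (m n h : ℕ) (c : Fin m × Fin n → Fin h → F) : Prop :=
  ∀ E : Finset (Fin m × Fin n),
    (∃ E' F' : Finset (Fin m × Fin n),
        IsAcyclicEdges E' ∧ F'.card ≤ h ∧ E = E' ∪ F') →
    ((gridH F m n h c).submatrix id (fun e : E => (e : Fin m × Fin n))).rank = E.card

/-- A *spanning tree* of the complete bipartite graph on `[m] ⊔ [n]`: an acyclic edge
set with `m + n - 1` edges. -/
def IsSpanningTree {m n : ℕ} (T : Finset (Fin m × Fin n)) : Prop :=
  IsAcyclicEdges T ∧ T.card = m + n - 1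

/-- `IsCycleSumOf c C s` says `C` is a simple cycle
`{(i₁,j₁),(i₂,j₁),…,(i_k,j_k),(i₁,j_k)}` and
`s = Σ_{ℓ=1}^{k} (c^{i_ℓ,j_ℓ} − c^{i_{ℓ+1},j_ℓ})` (with `i_{k+1} := i₁`) is the
corresponding cycle sum `Σ_H(C) ∈ F^h`. -/
def IsCycleSumOf {F : Type*} [Field F] {m n h : ℕ} (c : Fin m × Fin n → Fin h → F)
    (C : Finset (Fin m × Fin n)) (s : Fin h → F) : Prop :=
  ∃ k : ℕ, 2 ≤ k ∧ ∃ (I : ℕ → Fin m) (J : ℕ → Fin n),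
    Set.InjOn I (Set.Iio k) ∧ Set.InjOn J (Set.Iio k) ∧
    C = ((Finset.range k).image fun ℓ => (I ℓ, J ℓ)) ∪
        ((Finset.range k).image fun ℓ => (I ((ℓ + 1) % k), J ℓ)) ∧
    s = ∑ ℓ ∈ Finset.range k, (c (I ℓ, J ℓ) - c (I ((ℓ + 1) % k), J ℓ))

/-- `IsGammaCycleSumOf γ C g` says `C` is a simple cycle and
`g = γ(C) = Σ_{ℓ=1}^{k} (γ(i_ℓ,j_ℓ) − γ(i_{ℓ+1},j_ℓ))`. -/
def IsGammaCycleSumOf {F : Type*} [Field F] {m n : ℕ} (γ : Fin m × Fin n → F)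
    (C : Finset (Fin m × Fin n)) (g : F) : Prop :=
  ∃ k : ℕ, 2 ≤ k ∧ ∃ (I : ℕ → Fin m) (J : ℕ → Fin n),
    Set.InjOn I (Set.Iio k) ∧ Set.InjOn J (Set.Iio k) ∧
    C = ((Finset.range k).image fun ℓ => (I ℓ, J ℓ)) ∪
        ((Finset.range k).image fun ℓ => (I ((ℓ + 1) % k), J ℓ)) ∧
    g = ∑ ℓ ∈ Finset.range k, (γ (I ℓ, J ℓ) - γ (I ((ℓ + 1) % k), J ℓ))

open scoped Matrix

def cycleEdges {m n : ℕ} (k : ℕ) (I : ℕ → Fin m) (J : ℕ → Fin n) : Finset (Fin m × Fin n) :=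
  ((range k).image fun ℓ => (I ℓ, J ℓ)) ∪ ((range k).image fun ℓ => (I ((ℓ + 1) % k), J ℓ))

theorem isSimpleCycle_iff {m n : ℕ} {C : Finset (Fin m × Fin n)} :
    IsSimpleCycle C ↔ ∃ k, 2 ≤ k ∧ ∃ (I : ℕ → Fin m) (J : ℕ → Fin n),
      Set.InjOn I (Set.Iio k) ∧ Set.InjOn J (Set.Iio k) ∧ C = cycleEdges k I J :=
  Iff.rfl

section CyclicIndex

variable {k ℓ : ℕ}

theorem succ_mod_eq_ite (hℓ : ℓ < k) : (ℓ + 1) % k = if ℓ + 1 = k then 0 else ℓ + 1 := by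
  split_ifs with h
  · rw [h, Nat.mod_self]
  · exact Nat.mod_eq_of_lt (by omega)

theorem succ_mod_ne_self (hk : 2 ≤ k) (hℓ : ℓ < k) : (ℓ + 1) % k ≠ ℓ := by
  rw [succ_mod_eq_ite hℓ]; split_ifs <;> omega

theorem existsUnique_succ_mod_eq (hℓ : ℓ < k) : ∃! p, p < k ∧ (p + 1) % k = ℓ := by
  refine ⟨if ℓ = 0 then k - 1 else ℓ - 1, ⟨by split_ifs <;> omega, ?_⟩, ?_⟩
  · rw [succ_mod_eq_ite (by split_ifs <;> omega)]; split_ifs <;> omega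
  · rintro p ⟨hp, hpℓ⟩
    rw [succ_mod_eq_ite hp] at hpℓ; split_ifs at hpℓ ⊢ <;> omega

theorem forall_lt_of_succ_mod {P : ℕ → Prop} {s : ℕ} (hs : s < k) (hPs : P s)
    (step : ∀ ℓ < k, P ℓ → P ((ℓ + 1) % k)) : ∀ ℓ < k, P ℓ := by
  have hk : 0 < k := by omega
  have key : ∀ d, P ((s + d) % k) := by
    intro d
    induction d with
    | zero => rwa [Nat.add_zero, Nat.mod_eq_of_lt hs]
    | succ d ih =>
      rw [← Nat.add_assoc, ← Nat.mod_add_mod]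
      exact step _ (Nat.mod_lt _ hk) ih
  intro ℓ hℓ
  simpa [show s + (ℓ + k - s) = ℓ + k by omega, Nat.mod_eq_of_lt hℓ] using key (ℓ + k - s)

end CyclicIndex

section CycleEdges

variable {m n k : ℕ} {I : ℕ → Fin m} {J : ℕ → Fin n}

theorem mem_cycleEdges {e : Fin m × Fin n} :
    e ∈ cycleEdges k I J ↔ ∃ ℓ < k, e = (I ℓ, J ℓ) ∨ e = (I ((ℓ + 1) % k), J ℓ) := by
  simp only [cycleEdges, mem_union, mem_image, mem_range]
  grind

theorem filter_fst_cycleEdges (hI : Set.InjOn I (Set.Iio k)) {ℓ p : ℕ} (hℓ : ℓ < k)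
    (hp : p < k) (hpℓ : (p + 1) % k = ℓ) :
    {e ∈ cycleEdges k I J | e.1 = I ℓ} = {(I ℓ, J ℓ), (I ℓ, J p)} := by
  obtain ⟨_, -, hp_unique⟩ := existsUnique_succ_mod_eq (k := k) hℓ
  have hk : 0 < k := by omega
  ext e
  simp only [mem_filter, mem_cycleEdges, mem_insert, mem_singleton]
  constructor
  · rintro ⟨⟨ℓ', hℓ', rfl | rfl⟩, he⟩
    · rw [hI hℓ' hℓ he]; exact Or.inl rfl
    · have := hp_unique ℓ' ⟨hℓ', hI (Nat.mod_lt _ hk) hℓ he⟩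
      rw [← hp_unique p ⟨hp, hpℓ⟩] at this
      subst this; rw [hpℓ]; exact Or.inr rfl
  · rintro (rfl | rfl)
    · exact ⟨⟨ℓ, hℓ, Or.inl rfl⟩, rfl⟩
    · exact ⟨⟨p, hp, Or.inr (by rw [hpℓ])⟩, rfl⟩

theorem filter_snd_cycleEdges (hJ : Set.InjOn J (Set.Iio k)) {ℓ : ℕ} (hℓ : ℓ < k) :
    {e ∈ cycleEdges k I J | e.2 = J ℓ} = {(I ℓ, J ℓ), (I ((ℓ + 1) % k), J ℓ)} := by
  ext e
  simp only [mem_filter, mem_cycleEdges, mem_insert, mem_singleton]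
  constructor
  · rintro ⟨⟨ℓ', hℓ', rfl | rfl⟩, he⟩ <;> rw [hJ hℓ' hℓ he] <;> simp
  · rintro (rfl | rfl)
    · exact ⟨⟨ℓ, hℓ, Or.inl rfl⟩, rfl⟩
    · exact ⟨⟨ℓ, hℓ, Or.inr rfl⟩, rfl⟩

end CycleEdges

namespace IsSimpleCycle

variable {m n : ℕ} {C D : Finset (Fin m × Fin n)}

theorem nonempty (hC : IsSimpleCycle C) : C.Nonempty := by
  obtain ⟨k, hk, I, J, -, -, rfl⟩ := isSimpleCycle_iff.1 hC
  exact ⟨(I 0, J 0), mem_cycleEdges.2 ⟨0, by omega, Or.inl rfl⟩⟩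

theorem card_filter_fst (hC : IsSimpleCycle C) {e : Fin m × Fin n} (he : e ∈ C) :
    #{x ∈ C | x.1 = e.1} = 2 := by
  obtain ⟨k, hk, I, J, hI, hJ, rfl⟩ := isSimpleCycle_iff.1 hC
  obtain ⟨ℓ, hℓ, he1⟩ : ∃ ℓ < k, e.1 = I ℓ := by
    obtain ⟨ℓ, hℓ, rfl | rfl⟩ := mem_cycleEdges.1 he
    exacts [⟨ℓ, hℓ, rfl⟩, ⟨_, Nat.mod_lt _ (by omega), rfl⟩]
  obtain ⟨p, ⟨hp, hpℓ⟩, -⟩ := existsUnique_succ_mod_eq hℓ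
  rw [he1, filter_fst_cycleEdges hI hℓ hp hpℓ, card_pair]
  intro h
  have hpℓ' : p = ℓ := hJ hp hℓ (Prod.ext_iff.1 h).2.symm
  exact succ_mod_ne_self hk hp (hpℓ.trans hpℓ'.symm)

theorem card_filter_snd (hC : IsSimpleCycle C) {e : Fin m × Fin n} (he : e ∈ C) :
    #{x ∈ C | x.2 = e.2} = 2 := by
  obtain ⟨k, hk, I, J, hI, hJ, rfl⟩ := isSimpleCycle_iff.1 hC
  obtain ⟨ℓ, hℓ, he2⟩ : ∃ ℓ < k, e.2 = J ℓ := by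
    obtain ⟨ℓ, hℓ, rfl | rfl⟩ := mem_cycleEdges.1 he <;> exact ⟨ℓ, hℓ, rfl⟩
  rw [he2, filter_snd_cycleEdges hJ hℓ, card_pair]
  intro h
  exact succ_mod_ne_self hk hℓ (hI (Nat.mod_lt _ (by omega)) hℓ (Prod.ext_iff.1 h).1.symm)

theorem even_card_filter_fst (hC : IsSimpleCycle C) (i : Fin m) : Even #{x ∈ C | x.1 = i} := by
  obtain h | ⟨e, he⟩ := {x ∈ C | x.1 = i}.eq_empty_or_nonempty
  · simp [h]
  · obtain ⟨heC, rfl⟩ := mem_filter.1 he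
    simp [hC.card_filter_fst heC]

theorem even_card_filter_snd (hC : IsSimpleCycle C) (j : Fin n) : Even #{x ∈ C | x.2 = j} := by
  obtain h | ⟨e, he⟩ := {x ∈ C | x.2 = j}.eq_empty_or_nonempty
  · simp [h]
  · obtain ⟨heC, rfl⟩ := mem_filter.1 he
    simp [hC.card_filter_snd heC]

end IsSimpleCycle

namespace IsSimpleCycle

variable {m n : ℕ} {C D : Finset (Fin m × Fin n)}

theorem mem_of_fst_eq (hD : IsSimpleCycle D) (hC : IsSimpleCycle C) (hDC : D ⊆ C)
    {e e' : Fin m × Fin n} (he : e ∈ D) (he' : e' ∈ C) (h : e'.1 = e.1) : e' ∈ D := by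
  have hrow : {x ∈ D | x.1 = e.1} = {x ∈ C | x.1 = e.1} :=
    eq_of_subset_of_card_le (filter_subset_filter _ hDC)
      (by rw [hD.card_filter_fst he, hC.card_filter_fst (hDC he)])
  exact (mem_filter.1 (hrow ▸ mem_filter.2 ⟨he', h⟩)).1

theorem mem_of_snd_eq (hD : IsSimpleCycle D) (hC : IsSimpleCycle C) (hDC : D ⊆ C)
    {e e' : Fin m × Fin n} (he : e ∈ D) (he' : e' ∈ C) (h : e'.2 = e.2) : e' ∈ D := by
  have hcol : {x ∈ D | x.2 = e.2} = {x ∈ C | x.2 = e.2} :=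
    eq_of_subset_of_card_le (filter_subset_filter _ hDC)
      (by rw [hD.card_filter_snd he, hC.card_filter_snd (hDC he)])
  exact (mem_filter.1 (hcol ▸ mem_filter.2 ⟨he', h⟩)).1

/-- Walking along `C`, each edge of `D` forces the next one. -/
theorem eq_of_subset (hD : IsSimpleCycle D) (hC : IsSimpleCycle C) (hDC : D ⊆ C) : D = C := by
  obtain ⟨k, hk, I, J, hI, hJ, rfl⟩ := isSimpleCycle_iff.1 hC
  have hk0 : 0 < k := by omega
  have back : ∀ ℓ < k, (I ((ℓ + 1) % k), J ℓ) ∈ D → (I ℓ, J ℓ) ∈ D := fun ℓ hℓ h =>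
    hD.mem_of_snd_eq hC hDC h (mem_cycleEdges.2 ⟨ℓ, hℓ, Or.inl rfl⟩) rfl
  have forth : ∀ ℓ < k, (I ℓ, J ℓ) ∈ D → (I ((ℓ + 1) % k), J ℓ) ∈ D := fun ℓ hℓ h =>
    hD.mem_of_snd_eq hC hDC h (mem_cycleEdges.2 ⟨ℓ, hℓ, Or.inr rfl⟩) rfl
  obtain ⟨s, hs, hsD⟩ : ∃ s < k, (I s, J s) ∈ D := by
    obtain ⟨e, he⟩ := hD.nonempty
    obtain ⟨ℓ, hℓ, rfl | rfl⟩ := mem_cycleEdges.1 (hDC he)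
    exacts [⟨ℓ, hℓ, he⟩, ⟨ℓ, hℓ, back ℓ hℓ he⟩]
  have hall : ∀ ℓ < k, (I ℓ, J ℓ) ∈ D := by
    refine forall_lt_of_succ_mod hs hsD fun ℓ hℓ h => ?_
    exact hD.mem_of_fst_eq hC hDC (forth ℓ hℓ h)
      (mem_cycleEdges.2 ⟨_, Nat.mod_lt _ hk0, Or.inl rfl⟩) rfl
  refine hDC.antisymm fun e he => ?_
  obtain ⟨ℓ, hℓ, rfl | rfl⟩ := mem_cycleEdges.1 he
  exacts [hall ℓ hℓ, forth ℓ hℓ (hall ℓ hℓ)]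

theorem isAcyclicEdges_erase (hC : IsSimpleCycle C) {e : Fin m × Fin n} (he : e ∈ C) :
    IsAcyclicEdges (C.erase e) := fun _ hD hDcyc =>
  notMem_erase e C (hD (hDcyc.eq_of_subset hC (hD.trans (erase_subset e C)) ▸ he))

theorem apply_snd_eq_of_fst_eq (hC : IsSimpleCycle C) {α : Type*} {t : Fin n → α}
    (ht : ∀ e ∈ C, ∀ e' ∈ C, e.1 = e'.1 → t e.2 = t e'.2) :
    ∀ e ∈ C, ∀ e' ∈ C, t e.2 = t e'.2 := by
  obtain ⟨k, hk, I, J, -, -, rfl⟩ := isSimpleCycle_iff.1 hC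
  have hk0 : 0 < k := by omega
  have hconst : ∀ ℓ < k, t (J ℓ) = t (J 0) := by
    refine forall_lt_of_succ_mod hk0 rfl fun ℓ hℓ h => ?_
    rw [← h]
    exact ht _ (mem_cycleEdges.2 ⟨_, Nat.mod_lt _ hk0, Or.inl rfl⟩) _
      (mem_cycleEdges.2 ⟨ℓ, hℓ, Or.inr rfl⟩) rfl
  have hcol : ∀ e ∈ cycleEdges k I J, t e.2 = t (J 0) := by
    intro e he
    obtain ⟨ℓ, hℓ, rfl | rfl⟩ := mem_cycleEdges.1 he <;> exact hconst ℓ hℓ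
  exact fun e he e' he' => (hcol e he).trans (hcol e' he').symm

theorem image_map {n' : ℕ} (hC : IsSimpleCycle C) (g : Fin n → Fin n')
    (hg : Set.InjOn g (C.image Prod.snd)) : IsSimpleCycle (C.image (Prod.map id g)) := by
  obtain ⟨k, hk, I, J, hI, hJ, rfl⟩ := isSimpleCycle_iff.1 hC
  have hJC : ∀ ℓ < k, J ℓ ∈ (cycleEdges k I J).image Prod.snd := fun ℓ hℓ =>
    mem_image_of_mem Prod.snd (mem_cycleEdges.2 ⟨ℓ, hℓ, Or.inl rfl⟩)
  refine ⟨k, hk, I, g ∘ J, hI, fun a ha b hb hab => hJ ha hb (hg (hJC a ha) (hJC b hb) hab), ?_⟩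
  simp only [cycleEdges, image_union, image_image]
  rfl

end IsSimpleCycle

section Walk

variable {m n : ℕ} {S : Finset (Fin m × Fin n)} {i : ℕ → Fin m} {j : ℕ → Fin n}

theorem cycleEdges_subset_of_walk (hstep : ∀ d, (i d, j d) ∈ S)
    (hstep' : ∀ d, (i (d + 1), j d) ∈ S) {s k : ℕ} (hclose : (i s, j (s + k - 1)) ∈ S) :
    cycleEdges k (fun ℓ => i (s + ℓ)) (fun ℓ => j (s + ℓ)) ⊆ S := by
  intro e he
  obtain ⟨ℓ, hℓ, rfl | rfl⟩ := mem_cycleEdges.1 he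
  · exact hstep _
  · rw [succ_mod_eq_ite hℓ]
    split_ifs with h
    · simpa [show s + ℓ = s + k - 1 by omega] using hclose
    · exact hstep' (s + ℓ)

theorem Set.InjOn.comp_add_left {α : Type*} {f : ℕ → α} {d s k : ℕ}
    (hf : Set.InjOn f (Set.Iio d)) (hsk : s + k ≤ d) :
    Set.InjOn (fun ℓ => f (s + ℓ)) (Set.Iio k) := fun x hx y hy h => by
  simp only [Set.mem_Iio] at hx hy
  simpa using hf (show s + x < d by omega) (show s + y < d by omega) h

theorem exists_first_repeat (i : ℕ → Fin m) (j : ℕ → Fin n) :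
    ∃ d, ((∃ c < d, i c = i d) ∨ ∃ c < d, j c = j d) ∧
      Set.InjOn i (Set.Iio d) ∧ Set.InjOn j (Set.Iio d) := by
  classical
  let Rep : ℕ → Prop := fun d => (∃ c < d, i c = i d) ∨ ∃ c < d, j c = j d
  have hrep : ∃ d, Rep d := by
    obtain ⟨x, y, hxy, h⟩ := Finite.exists_ne_map_eq_of_infinite i
    rcases hxy.lt_or_gt with hlt | hlt
    exacts [⟨y, Or.inl ⟨x, hlt, h⟩⟩, ⟨x, Or.inl ⟨y, hlt, h.symm⟩⟩]
  have hinj : ∀ {α : Type} (f : ℕ → α), (∀ d' < Nat.find hrep, ∀ c < d', f c ≠ f d') →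
      Set.InjOn f (Set.Iio (Nat.find hrep)) := by
    intro α f hf x hx y hy hxy
    by_contra hne
    rcases Ne.lt_or_gt hne with hlt | hlt
    exacts [hf y hy x hlt hxy, hf x hx y hlt hxy.symm]
  exact ⟨Nat.find hrep, Nat.find_spec hrep,
    hinj i fun d' hd' c hc h => Nat.find_min hrep hd' (Or.inl ⟨c, hc, h⟩),
    hinj j fun d' hd' c hc h => Nat.find_min hrep hd' (Or.inr ⟨c, hc, h⟩)⟩

/-- The alternating walk `(i 0, j 0), (i 1, j 0), (i 1, j 1), …` closes up into a simple cycle at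
the first vertex it revisits. -/
theorem exists_isSimpleCycle_subset_of_walk (hstep : ∀ d, (i d, j d) ∈ S)
    (hstep' : ∀ d, (i (d + 1), j d) ∈ S) (hi : ∀ d, i (d + 1) ≠ i d)
    (hj : ∀ d, j (d + 1) ≠ j d) : ∃ C ⊆ S, IsSimpleCycle C := by
  obtain ⟨d, hd, hI, hJ⟩ := exists_first_repeat i j
  by_cases hrow : ∃ c < d, i c = i d
  · obtain ⟨c, hcd, hc⟩ := hrow
    have hk : 2 ≤ d - c := by
      by_contra h
      exact hi c (by rw [show c + 1 = d by omega]; exact hc.symm)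
    refine ⟨_, cycleEdges_subset_of_walk hstep hstep' (s := c) (k := d - c) ?_,
      ⟨d - c, hk, _, _, hI.comp_add_left (by omega), hJ.comp_add_left (by omega), rfl⟩⟩
    rw [hc, show c + (d - c) - 1 = d - 1 by omega]
    simpa [show d - 1 + 1 = d by omega] using hstep' (d - 1)
  · -- the repeated vertex is the column `j d = j c`, so the cycle starts at the row `i (c + 1)`
    obtain ⟨c, hcd, hc⟩ := hd.resolve_left hrow
    have hk : 2 ≤ d - c := by
      by_contra h
      exact hj c (by rw [show c + 1 = d by omega]; exact hc.symm)
    have hI' : Set.InjOn i (Set.Iio (d + 1)) := by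
      intro x hx y hy h
      simp only [Set.mem_Iio] at hx hy
      rcases (show x < d ∨ x = d by omega), (show y < d ∨ y = d by omega) with
        ⟨hx | rfl, hy | rfl⟩
      exacts [hI hx hy h, (hrow ⟨x, hx, h⟩).elim, (hrow ⟨y, hy, h.symm⟩).elim, rfl]
    have hJ' : Set.InjOn (fun ℓ => j (c + 1 + ℓ)) (Set.Iio (d - c)) := by
      have hjd : ∀ z, j (c + 1 + z) = j (if c + 1 + z = d then c else c + 1 + z) := by
        intro z
        split_ifs with hz
        · rw [hz, hc]
        · rfl
      intro x hx y hy h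
      simp only [Set.mem_Iio] at hx hy
      simp only [hjd x, hjd y] at h
      have := hJ (by simp only [Set.mem_Iio]; split_ifs <;> omega)
        (by simp only [Set.mem_Iio]; split_ifs <;> omega) h
      split_ifs at this <;> omega
    refine ⟨_, cycleEdges_subset_of_walk hstep hstep' (s := c + 1) (k := d - c) ?_,
      ⟨d - c, hk, _, _, hI'.comp_add_left (by omega), hJ', rfl⟩⟩
    rw [show c + 1 + (d - c) - 1 = d by omega, ← hc]
    exact hstep' c

theorem exists_isSimpleCycle_subset (hS : S.Nonempty)
    (hrow : ∀ e ∈ S, ∃ e' ∈ S, e'.1 = e.1 ∧ e'.2 ≠ e.2)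
    (hcol : ∀ e ∈ S, ∃ e' ∈ S, e'.2 = e.2 ∧ e'.1 ≠ e.1) : ∃ C ⊆ S, IsSimpleCycle C := by
  obtain ⟨e₀, he₀⟩ := hS
  have : Nonempty (Fin m × Fin n) := ⟨e₀⟩
  choose! σ hσS hσ2 hσ1 using hcol
  choose! τ hτS hτ1 hτ2 using hrow
  set x : ℕ → Fin m × Fin n := fun d => (τ ∘ σ)^[d] e₀
  have hx : ∀ d, x (d + 1) = τ (σ (x d)) := fun d => Function.iterate_succ_apply' _ _ _
  have hxS : ∀ d, x d ∈ S := by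
    intro d
    induction d with
    | zero => exact he₀
    | succ d ih => exact hx d ▸ hτS _ (hσS _ ih)
  refine exists_isSimpleCycle_subset_of_walk (i := fun d => (x d).1) (j := fun d => (x d).2)
    (fun d => hxS d) (fun d => ?_) (fun d => ?_) (fun d => ?_) <;>
    simp only [hx, hτ1 _ (hσS _ (hxS _))]
  · rw [← hσ2 _ (hxS d)]
    exact hσS _ (hxS d)
  · exact hσ1 _ (hxS d)
  · exact hσ2 _ (hxS d) ▸ hτ2 _ (hσS _ (hxS d))

end Walk

theorem Matrix.rank_submatrix_val_eq_card_iff {R C F : Type*} [Fintype R] [Fintype C] [Field F]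
    (M : Matrix R C F) (E : Finset C) :
    (M.submatrix id (fun e : E => (e : C))).rank = #E ↔
      ∀ v : C → F, (∀ e ∉ E, v e = 0) → M *ᵥ v = 0 → v = 0 := by
  classical
  have hsum : ∀ v : C → F, (∀ e ∉ E, v e = 0) → ∑ e ∈ E, v e • M.col e = M *ᵥ v := by
    intro v hv
    ext r
    simp only [Finset.sum_apply, Pi.smul_apply, Matrix.col_apply, smul_eq_mul, Matrix.mulVec,
      dotProduct]
    rw [← sum_subset (subset_univ E) fun e _ he => by simp [hv e he]]
    exact sum_congr rfl fun e _ => mul_comm _ _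
  rw [Matrix.rank_eq_finrank_span_cols, ← Fintype.card_coe, eq_comm, ← Set.finrank,
    ← linearIndependent_iff_card_eq_finrank_span]
  change LinearIndepOn F M.col ↑E ↔ _
  rw [linearIndepOn_finset_iff]
  constructor
  · intro h v hvE hv
    ext e
    by_cases he : e ∈ E
    · exact h v (by rw [hsum v hvE, hv]) e he
    · exact hvE e he
  · intro h g hg e he
    have := h (fun e => if e ∈ E then g e else 0) (fun e he => if_neg he)
      (by rw [← hsum _ fun e he => if_neg he, ← hg]; exact sum_congr rfl fun e he => by simp [he])
    simpa [he] using congrFun this e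


theorem sum_filter_eq_zero_of_forall_ne {ι κ M : Type*} [Fintype κ] [DecidableEq κ]
    [AddCommMonoid M] {s : Finset ι} {g : ι → κ} {f : ι → M} (hs : ∑ i ∈ s, f i = 0) {j₀ : κ}
    (h : ∀ j ≠ j₀, ∑ i ∈ s with g i = j, f i = 0) : ∑ i ∈ s with g i = j₀, f i = 0 := by
  rwa [← sum_fiberwise s g f, sum_eq_single j₀ (fun j _ hj => h j hj) (by simp)] at hs

theorem exists_ne_apply_ne_zero_of_sum_eq_zero {ι M : Type*} [AddCommMonoid M] {s : Finset ι}
    {f : ι → M} (hs : ∑ i ∈ s, f i = 0) {i₀ : ι} (hi₀ : i₀ ∈ s) (hf : f i₀ ≠ 0) :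
    ∃ i ∈ s, i ≠ i₀ ∧ f i ≠ 0 := by
  by_contra! h
  exact hf (by rwa [sum_eq_single_of_mem i₀ hi₀ fun i hi hne => h i hi hne] at hs)

section GridCode

variable {F : Type*} [Field F] {m n : ℕ}

/-- The check of the last column is not a row of `gridH`, but it is implied by the others: the
column sums add up to the total, which is the sum of the row sums. -/
theorem gridH_mulVec_eq_zero_iff {h : ℕ} (c : Fin m × Fin n → Fin h → F)
    (v : Fin m × Fin n → F) :
    gridH F m n h c *ᵥ v = 0 ↔ (∀ i, ∑ e with e.1 = i, v e = 0) ∧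
      (∀ j, ∑ e with e.2 = j, v e = 0) ∧ ∀ k, ∑ e, c e k * v e = 0 := by
  have hcol : ∀ j : Fin (n - 1), (gridH F m n h c *ᵥ v) (.inr (.inl j)) =
      ∑ e with e.2 = ⟨j, by omega⟩, v e := by
    intro j
    simp [gridH, Matrix.mulVec, dotProduct, sum_filter, Fin.ext_iff]
  constructor
  · intro hv
    have hrow : ∀ i, ∑ e with e.1 = i, v e = 0 := fun i => by
      simpa [gridH, Matrix.mulVec, dotProduct, sum_filter] using congrFun hv (.inl i)
    refine ⟨hrow, fun j₀ => ?_, fun k => by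
      simpa [gridH, Matrix.mulVec, dotProduct] using congrFun hv (.inr (.inr k))⟩
    have hlt : ∀ j : Fin n, (j : ℕ) < n - 1 → ∑ e with e.2 = j, v e = 0 := fun j hj => by
      simpa [hcol ⟨j, hj⟩] using congrFun hv (.inr (.inl ⟨j, hj⟩))
    by_cases hj₀ : (j₀ : ℕ) < n - 1
    · exact hlt j₀ hj₀
    · refine sum_filter_eq_zero_of_forall_ne ?_ fun j hj => hlt j (by omega)
      rw [← sum_fiberwise univ Prod.fst v]
      exact sum_eq_zero fun i _ => hrow i
  · rintro ⟨hrow, hcol', hglob⟩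
    ext (i | j | k)
    · simpa [gridH, Matrix.mulVec, dotProduct, sum_filter] using hrow i
    · simpa [hcol] using hcol' _
    · simpa [gridH, Matrix.mulVec, dotProduct] using hglob k

theorem exists_isSimpleCycle_of_sum_eq_zero {G : Type*} [AddCommMonoid G]
    {v : Fin m × Fin n → G} (hrow : ∀ i, ∑ e with e.1 = i, v e = 0)
    (hcol : ∀ j, ∑ e with e.2 = j, v e = 0) (hv : v ≠ 0) :
    ∃ C, IsSimpleCycle C ∧ ∀ e ∈ C, v e ≠ 0 := by
  classical
  obtain ⟨e₀, he₀⟩ := Function.ne_iff.1 hv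
  obtain ⟨C, hCS, hC⟩ := exists_isSimpleCycle_subset (S := {e | v e ≠ 0}) ⟨e₀, by simpa using he₀⟩
    (fun e he => by
      obtain ⟨e', he', hne, hv'⟩ := exists_ne_apply_ne_zero_of_sum_eq_zero (hrow e.1)
        (by simp) (mem_filter.1 he).2
      exact ⟨e', by simpa using hv', (mem_filter.1 he').2, fun h => hne (Prod.ext (by simpa
        using (mem_filter.1 he').2) h)⟩)
    (fun e he => by
      obtain ⟨e', he', hne, hv'⟩ := exists_ne_apply_ne_zero_of_sum_eq_zero (hcol e.2)
        (by simp) (mem_filter.1 he).2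
      exact ⟨e', by simpa using hv', (mem_filter.1 he').2, fun h => hne (Prod.ext h (by simpa
        using (mem_filter.1 he').2))⟩)
  exact ⟨C, hC, fun e he => (mem_filter.1 (hCS he)).2⟩

theorem eq_zero_of_sum_eq_zero_of_isAcyclicEdges {G : Type*} [AddCommMonoid G]
    {v : Fin m × Fin n → G} (hrow : ∀ i, ∑ e with e.1 = i, v e = 0)
    (hcol : ∀ j, ∑ e with e.2 = j, v e = 0) {E : Finset (Fin m × Fin n)}
    (hE : IsAcyclicEdges E) (hvE : ∀ e ∉ E, v e = 0) : v = 0 := by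
  by_contra hv
  obtain ⟨C, hC, hCv⟩ := exists_isSimpleCycle_of_sum_eq_zero hrow hcol hv
  exact hE C (fun e he => by_contra fun h => hCv e he (hvE e h)) hC

variable [CharP F 2]

theorem IsSimpleCycle.sum_indicator_eq_zero {C : Finset (Fin m × Fin n)} (hC : IsSimpleCycle C) :
    (∀ i, ∑ e with e.1 = i, (if e ∈ C then (1 : F) else 0) = 0) ∧
      ∀ j, ∑ e with e.2 = j, (if e ∈ C then (1 : F) else 0) = 0 := by
  refine ⟨fun i => ?_, fun j => ?_⟩ <;> rw [sum_boole, CharTwo.natCast_eq_ite, if_pos]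
  · convert hC.even_card_filter_fst i using 2; ext; simp [and_comm]
  · convert hC.even_card_filter_snd j using 2; ext; simp [and_comm]

theorem IsMR.sum_ne_zero {c : Fin m × Fin n → Fin 1 → F} (hc : IsMR F m n 1 c)
    {C : Finset (Fin m × Fin n)} (hC : IsSimpleCycle C) : ∑ e ∈ C, c e 0 ≠ 0 := by
  intro hsum
  obtain ⟨e₀, he₀⟩ := hC.nonempty
  have hrank := hc C ⟨C.erase e₀, {e₀}, hC.isAcyclicEdges_erase he₀, by simp, by simp [he₀]⟩
  obtain ⟨hrow, hcol⟩ := hC.sum_indicator_eq_zero (F := F)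
  have hker := (Matrix.rank_submatrix_val_eq_card_iff _ C).1 hrank _ (fun e he => if_neg he)
    ((gridH_mulVec_eq_zero_iff c _).2 ⟨hrow, hcol, fun k => by simpa [Fin.fin_one_eq_zero k]⟩)
  simpa [he₀] using congrFun hker e₀

theorem isMR_of_sum_ne_zero {c : Fin m × Fin n → Fin 1 → F}
    (hc : ∀ C, IsSimpleCycle C → ∑ e ∈ C, c e 0 ≠ 0) : IsMR F m n 1 c := by
  rintro E ⟨E', F', hE', hF', rfl⟩
  refine (Matrix.rank_submatrix_val_eq_card_iff _ _).2 fun v hvE hv => ?_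
  obtain ⟨hrow, hcol, hglob⟩ := (gridH_mulVec_eq_zero_iff c v).1 hv
  by_contra hv0
  obtain ⟨C, hC, hCv⟩ := exists_isSimpleCycle_of_sum_eq_zero hrow hcol hv0
  obtain ⟨f, hfC, hfE'⟩ := not_subset.1 fun h => hE' C h hC
  have hfF' : f ∈ F' :=
    (mem_union.1 (by_contra fun h => hCv f hfC (hvE f h))).resolve_left hfE'
  obtain ⟨hrowC, hcolC⟩ := hC.sum_indicator_eq_zero (F := F)
  have hμ : (fun e => v e - v f * if e ∈ C then 1 else 0) = 0 := by
    refine eq_zero_of_sum_eq_zero_of_isAcyclicEdges (fun i => ?_) (fun j => ?_) hE' fun e he => ?_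
    · rw [sum_sub_distrib, ← mul_sum, hrow i, hrowC i, mul_zero, sub_zero]
    · rw [sum_sub_distrib, ← mul_sum, hcol j, hcolC j, mul_zero, sub_zero]
    by_cases hef : e = f
    · simp [hef, hfC]
    have heF' : e ∉ F' := fun h => hef (card_le_one.1 hF' e h f hfF')
    have hve : v e = 0 := hvE e (by simp [he, heF'])
    have heC : e ∉ C := fun h => hCv e h hve
    simp [hve, heC]
  have hvC : ∀ e, c e 0 * v e = if e ∈ C then v f * c e 0 else 0 := fun e => by
    rw [sub_eq_zero.1 (congrFun hμ e)]
    split_ifs <;> ring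
  have hsum : v f * ∑ e ∈ C, c e 0 = 0 := by
    rw [← hglob 0, sum_congr rfl fun e _ => hvC e, sum_ite_mem, univ_inter, mul_sum]
  exact hCv f hfC ((mul_eq_zero.1 hsum).resolve_right (hc C hC))

end GridCode

section Construction

variable {W : Type*} [AddCommGroup W] [Module (ZMod 2) W] {m n N : ℕ}

/-- The paper's `γ(i, s)`: the label `φ s` placed in coordinate `i`. Row `m - 1` gets no
coordinate, which is what keeps the field size at `N ^ (m - 1) · q_m`. -/
def gammaLabel (φ : Fin N → W) (i : Fin m) (s : Fin N) : Fin (m - 1) → W :=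
  fun p => if (p : ℕ) = i then φ s else 0

theorem IsSimpleCycle.sum_apply_snd_eq_zero {C : Finset (Fin m × Fin n)} (hC : IsSimpleCycle C)
    (f : Fin n → W) : ∑ e ∈ C, f e.2 = 0 := by
  rw [← sum_fiberwise C Prod.snd]
  refine sum_eq_zero fun j _ => ?_
  rw [sum_congr rfl fun e he => by rw [(mem_filter.1 he).2], sum_const]
  obtain ⟨r, hr⟩ := hC.even_card_filter_snd j
  rw [hr, add_nsmul, ZModModule.add_self]

/-- Coordinate `i` of the `γ`-sum is the sum of the labels on row `i` of `C`; the missing row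
`m - 1` is recovered since every column of `C` contributes its label twice. -/
theorem IsSimpleCycle.apply_snd_eq_of_sum_gammaLabel_eq_zero {C : Finset (Fin m × Fin n)}
    (hC : IsSimpleCycle C) {φ : Fin N → W} (hφ : Function.Injective φ) {t : Fin n → Fin N}
    (h : ∑ e ∈ C, gammaLabel φ e.1 (t e.2) = 0) : ∀ e ∈ C, ∀ e' ∈ C, t e.2 = t e'.2 := by
  have hrow' : ∀ i : Fin m, (i : ℕ) < m - 1 → ∑ e ∈ C with e.1 = i, φ (t e.2) = 0 := by
    intro i hi
    simpa [gammaLabel, Finset.sum_apply, sum_filter, Fin.ext_iff, eq_comm] using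
      congrFun h ⟨i, hi⟩
  have hrow : ∀ i, ∑ e ∈ C with e.1 = i, φ (t e.2) = 0 := by
    intro i
    by_cases hi : (i : ℕ) < m - 1
    · exact hrow' i hi
    · refine sum_filter_eq_zero_of_forall_ne (hC.sum_apply_snd_eq_zero (φ ∘ t)) fun i' hi' => ?_
      exact hrow' i' (by have := Fin.val_ne_of_ne hi'; omega)
  refine hC.apply_snd_eq_of_fst_eq fun e he e' he' hee' => hφ ?_
  by_cases hne : e = e'
  · rw [hne]
  have hpair : {x ∈ C | x.1 = e.1} = {e, e'} :=
    (eq_of_subset_of_card_le (by simp [insert_subset_iff, he, he', hee'.symm])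
      (by rw [hC.card_filter_fst he, card_pair hne])).symm
  have he2 := hrow e.1
  rw [hpair, sum_pair hne] at he2
  rw [eq_neg_of_add_eq_zero_left he2, ZModModule.neg_eq_self]

theorem sum_prod_gammaLabel_ne_zero {A : Type*} [AddCommGroup A] {m' : ℕ}
    {c : Fin m × Fin m' → A} (hc : ∀ C, IsSimpleCycle C → ∑ e ∈ C, c e ≠ 0)
    {q : Fin n → Fin m'} {t : Fin n → Fin N} (hqt : Function.Injective fun j => (q j, t j))
    {φ : Fin N → W} (hφ : Function.Injective φ) {C : Finset (Fin m × Fin n)}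
    (hC : IsSimpleCycle C) : ∑ e ∈ C, (c (e.1, q e.2), gammaLabel φ e.1 (t e.2)) ≠ 0 := by
  intro h
  have ht := hC.apply_snd_eq_of_sum_gammaLabel_eq_zero hφ
    (by simpa [Prod.snd_sum] using congrArg Prod.snd h)
  have hq : Set.InjOn q (C.image Prod.snd) := by
    rintro _ hx _ hy hxy
    obtain ⟨e, he, rfl⟩ := mem_image.1 hx
    obtain ⟨e', he', rfl⟩ := mem_image.1 hy
    exact hqt (Prod.ext hxy (ht e he e' he'))
  have hinj : Set.InjOn (Prod.map id q) C := fun e he e' he' hee' =>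
    Prod.ext (Prod.ext_iff.1 hee').1
      (hq (mem_image_of_mem _ he) (mem_image_of_mem _ he') (Prod.ext_iff.1 hee').2)
  refine hc _ (hC.image_map q hq) ?_
  rw [sum_image hinj]
  exact (by simpa [Prod.fst_sum] using congrArg Prod.fst h : ∑ e ∈ C, c (e.1, q e.2) = 0)

theorem IsMR.prod_gammaLabel {Fm F : Type*} [Field Fm] [CharP Fm 2] [Field F] [CharP F 2]
    {m' : ℕ} {c : Fin m × Fin m' → Fin 1 → Fm} (hc : IsMR Fm m m' 1 c)
    {q : Fin n → Fin m'} {t : Fin n → Fin N} (hqt : Function.Injective fun j => (q j, t j))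
    {φ : Fin N → W} (hφ : Function.Injective φ) (ι : Fm × (Fin (m - 1) → W) ≃+ F) :
    IsMR F m n 1 fun e _ => ι (c (e.1, q e.2) 0, gammaLabel φ e.1 (t e.2)) :=
  isMR_of_sum_ne_zero fun C hC h => sum_prod_gammaLabel_ne_zero (fun _ hD => hc.sum_ne_zero hD)
    hqt hφ hC (ι.injective (by rw [map_sum, h, map_zero]))

end Construction

theorem nonempty_linearEquiv_of_card_eq {K V V' : Type*} [Field K] [Fintype K] [AddCommGroup V]
    [Module K V] [Fintype V] [AddCommGroup V'] [Module K V'] [Fintype V']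
    (h : Fintype.card V = Fintype.card V') : Nonempty (V ≃ₗ[K] V') :=
  FiniteDimensional.nonempty_linearEquiv_of_finrank_eq <| Nat.pow_right_injective
    (Fintype.one_lt_card (α := K)) <| by
      dsimp only
      rw [← Module.card_eq_pow_finrank, ← Module.card_eq_pow_finrank, h]

theorem statement14_general (m n : ℕ) (hmn : m ≤ n)
    (hm2 : ∃ s : ℕ, m = 2 ^ s) (hn2 : ∃ t : ℕ, n = 2 ^ t)
    (Fm : Type*) [Field Fm] [Fintype Fm] (hqm : ∃ s : ℕ, Fintype.card Fm = 2 ^ s)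
    (hex : ∃ c : Fin m × Fin m → Fin 1 → Fm, IsMR Fm m m 1 c)
    (F : Type*) [Field F] [Fintype F]
    (hcard : Fintype.card F = (n / m) ^ (m - 1) * Fintype.card Fm) :
    ∃ c' : Fin m × Fin n → Fin 1 → F, IsMR F m n 1 c' := by
  obtain ⟨s, rfl⟩ := hm2
  obtain ⟨t, rfl⟩ := hn2
  obtain ⟨r, hr⟩ := hqm
  obtain ⟨c, hc⟩ := hex
  have hst : s ≤ t := (Nat.pow_le_pow_iff_right (by norm_num)).1 hmn
  rw [Nat.pow_div hst two_pos] at hcard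
  have hF : Fintype.card F = 2 ^ ((t - s) * (2 ^ s - 1) + r) := by
    rw [hcard, hr, ← pow_mul, pow_add]
  have := charP_of_card_eq_prime_pow hr
  have := charP_of_card_eq_prime_pow hF
  let _ := ZMod.algebra Fm 2
  let _ := ZMod.algebra F 2
  obtain ⟨ι⟩ := nonempty_linearEquiv_of_card_eq (K := ZMod 2)
    (V := Fm × (Fin (2 ^ s - 1) → Fin (t - s) → ZMod 2)) (V' := F)
    (by simp [hcard, mul_comm])
  let φ : Fin (2 ^ (t - s)) ≃ (Fin (t - s) → ZMod 2) := Fintype.equivOfCardEq (by simp)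
  let col : Fin (2 ^ t) ≃ Fin (2 ^ s) × Fin (2 ^ (t - s)) :=
    (finCongr (by rw [← pow_add, Nat.add_sub_cancel' hst])).trans finProdFinEquiv.symm
  exact ⟨_, hc.prod_gammaLabel col.injective φ.injective ι.toAddEquiv⟩

/-- Theorem A.2.  Let `m ≤ n` be powers of two with `m ≥ 2`, and
suppose an MR `(m, m, a=1, b=1, h=1)` grid code exists over a field `F_{q_m}` with
`q_m` a power of two.  Then an MR `(m, n, a=1, b=1, h=1)` grid code exists over any
field with `q = (n / m) ^ (m - 1) * q_m` elements. -/
theorem statement14 (m n : ℕ) (hm : 2 ≤ m) (hmn : m ≤ n)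
    (hm2 : ∃ s : ℕ, m = 2 ^ s) (hn2 : ∃ t : ℕ, n = 2 ^ t)
    (Fm : Type*) [Field Fm] [Fintype Fm] (hqm : ∃ s : ℕ, Fintype.card Fm = 2 ^ s)
    (hex : ∃ c : Fin m × Fin m → Fin 1 → Fm, IsMR Fm m m 1 c)
    (F : Type*) [Field F] [Fintype F]
    (hcard : Fintype.card F = (n / m) ^ (m - 1) * Fintype.card Fm) :
    ∃ c' : Fin m × Fin n → Fin 1 → F, IsMR F m n 1 c' :=
  statement14_general m n hmn hm2 hn2 Fm hqm hex F hcard
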